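/- For any k ∈ ℕ, the function φ_k(x) := (1/k) Σ_{i=1}^k 2·σ(x − (2i−1)/(2k)), where σ(t) = max{t,0}, satisfies: φ_k(x) = 0 for all x ≤ 0, φ_k(x) ∈ [0,1] for all x ∈ [0,1], and |x² − φ_k(x)| ≤ 1/(2k²) for all x ∈ [0,1]. Moreover φ_k ∈ NN_{1,1}(k,1,3). -/

import Mathlib

open Finset
open scoped BigOperators

/-- ReLU activation. -/
noncomputable def relu (x : ℝ) : ℝ := max x 0

/-- Parameters of a fully connected feed-forward ReLU neural network with input
dimension `d` and output dimension `k`. -/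
structure MLP (d k : ℕ) where
  depth : ℕ
  width : ℕ → ℕ
  width_in : width 0 = d
  width_out : width (depth + 1) = k
  A : (ℓ : ℕ) → Matrix (Fin (width (ℓ + 1))) (Fin (width ℓ)) ℝ
  b : (ℓ : ℕ) → Fin (width (ℓ + 1)) → ℝ

namespace MLP

variable {d k : ℕ}

/-- Hidden layer outputs: `φ₀(x) = x`, `φ_{ℓ+1}(x) = σ(A_ℓ φ_ℓ(x) + b_ℓ)`. -/
noncomputable def layer (φ : MLP d k) (x : Fin d → ℝ) : (ℓ : ℕ) → Fin (φ.width ℓ) → ℝ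
  | 0 => fun i => x (Fin.cast φ.width_in i)
  | ℓ + 1 => fun i => relu ((φ.A ℓ).mulVec (layer φ x ℓ) i + φ.b ℓ i)

/-- The function computed by the network: `φ(x) = A_L φ_L(x) + b_L`. -/
noncomputable def eval (φ : MLP d k) (x : Fin d → ℝ) : Fin k → ℝ := fun j =>
  (φ.A φ.depth).mulVec (φ.layer x φ.depth) (Fin.cast φ.width_out.symm j) +
    φ.b φ.depth (Fin.cast φ.width_out.symm j)

/-- Maximum ℓ¹-norm of the rows of the augmented matrix `(A, b)`. -/
noncomputable def augNorm {m n : ℕ} (A : Matrix (Fin m) (Fin n) ℝ) (b : Fin m → ℝ) : ℝ :=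
  ⨆ i : Fin m, ((∑ j, |A i j|) + |b i|)

/-- The norm constraint `κ(θ) = ‖(A_L,b_L)‖ ∏_{ℓ<L} max{‖(A_ℓ,b_ℓ)‖, 1}`. -/
noncomputable def kappa (φ : MLP d k) : ℝ :=
  augNorm (φ.A φ.depth) (φ.b φ.depth) *
    ∏ ℓ ∈ Finset.range φ.depth, max (augNorm (φ.A ℓ) (φ.b ℓ)) 1

end MLP

/-- The class `NN_{d,k}(W, L)` of ReLU networks with width at most `W` and depth `L`. -/
def NNSet (d k W L : ℕ) : Set ((Fin d → ℝ) → Fin k → ℝ) :=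
  {f | ∃ φ : MLP d k, φ.depth = L ∧ (∀ ℓ, 1 ≤ ℓ → ℓ ≤ L → φ.width ℓ ≤ W) ∧ f = φ.eval}

/-- The norm-constrained class `NN_{d,k}(W, L, K)`. -/
def NNSetNorm (d k W L : ℕ) (K : ℝ) : Set ((Fin d → ℝ) → Fin k → ℝ) :=
  {f | ∃ φ : MLP d k, φ.depth = L ∧ (∀ ℓ, 1 ≤ ℓ → ℓ ≤ L → φ.width ℓ ≤ W) ∧
      φ.kappa ≤ K ∧ f = φ.eval}

/-- Scalar-valued networks `NN_{d,1}(W, L)`, viewed as maps `ℝ^d → ℝ`. -/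
def NNScalar (d W L : ℕ) : Set ((Fin d → ℝ) → ℝ) :=
  {f | ∃ g ∈ NNSet d 1 W L, f = fun x => g x 0}

/-- Scalar-valued norm-constrained networks `NN_{d,1}(W, L, K)`, viewed as maps `ℝ^d → ℝ`. -/
def NNScalarNorm (d W L : ℕ) (K : ℝ) : Set ((Fin d → ℝ) → ℝ) :=
  {f | ∃ g ∈ NNSetNorm d 1 W L K, f = fun x => g x 0}

/-- Networks `NN_{1,k}(W, L)` with one-dimensional input, viewed as maps `ℝ → ℝ^k`. -/
def NNFromReal (k W L : ℕ) : Set (ℝ → Fin k → ℝ) :=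
  {f | ∃ g ∈ NNSet 1 k W L, f = fun t => g (fun _ => t)}

/-- Norm-constrained networks `NN_{1,1}(W, L, K)`, viewed as maps `ℝ → ℝ`. -/
def NNRealScalarNorm (W L : ℕ) (K : ℝ) : Set (ℝ → ℝ) :=
  {f | ∃ g ∈ NNSetNorm 1 1 W L K, f = fun t => g (fun _ => t) 0}

/-- The function `φ_k(x) = (1/k) ∑_{i=1}^{k} 2 σ(x − (2i−1)/(2k))`. -/
noncomputable def phiSq (k : ℕ) (x : ℝ) : ℝ :=
  (k : ℝ)⁻¹ * ∑ i ∈ Finset.range k, 2 * relu (x - (2 * (i : ℝ) + 1) / (2 * (k : ℝ)))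

/-!
If `m` is the integer nearest to `k x`, then exactly the first `m` ReLUs of `φ_k` are active at `x`,
and since `∑_{i<m} (2i+1) = m²` this gives `φ_k(x) = x² - (x - m/k)²`, an error of at most
`1/(4k²)`. For the norm bound, positive homogeneity of `σ` lets each neuron be rescaled so that
every hidden row has `ℓ¹`-norm `1`, which leaves output weights summing to `3`.
-/

lemma relu_of_nonpos {t : ℝ} (h : t ≤ 0) : relu t = 0 := max_eq_right h

lemma relu_of_nonneg {t : ℝ} (h : 0 ≤ t) : relu t = t := max_eq_left h

lemma relu_nonneg (t : ℝ) : 0 ≤ relu t := le_max_right _ _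

lemma relu_mul_of_nonneg {a : ℝ} (ha : 0 ≤ a) (t : ℝ) : relu (a * t) = a * relu t := by
  simp only [relu, mul_max_of_nonneg _ _ ha, mul_zero]

lemma sum_range_two_mul_add_one (m : ℕ) : ∑ i ∈ range m, (2 * (i : ℝ) + 1) = (m : ℝ) ^ 2 := by
  induction m with
  | zero => simp
  | succ n ih => rw [sum_range_succ, ih]; push_cast; ring

lemma exists_nat_le_abs_sub_le_half {y : ℝ} {k : ℕ} (h0 : 0 ≤ y) (hk : y ≤ k) :
    ∃ m ≤ k, |y - m| ≤ 1 / 2 := by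
  refine ⟨⌊y + 1 / 2⌋₊, Nat.lt_succ_iff.mp ((Nat.floor_lt (by positivity)).2 ?_), ?_⟩
  · push_cast; linarith
  · have := Nat.floor_le (a := y + 1 / 2) (by positivity)
    have := Nat.lt_floor_add_one (y + 1 / 2)
    rw [abs_le]; constructor <;> linarith

lemma phiSq_of_nonpos {k : ℕ} {x : ℝ} (hx : x ≤ 0) : phiSq k x = 0 := by
  refine mul_eq_zero_of_right _ (sum_eq_zero fun i _ => ?_)
  rw [relu_of_nonpos, mul_zero]
  have : 0 ≤ (2 * (i : ℝ) + 1) / (2 * k) := by positivity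
  linarith

lemma phiSq_nonneg (k : ℕ) (x : ℝ) : 0 ≤ phiSq k x :=
  mul_nonneg (by positivity) (sum_nonneg fun _ _ => mul_nonneg zero_le_two (relu_nonneg _))

lemma sum_two_mul_relu_eq {k m : ℕ} {x : ℝ} (hk : 0 < k) (hmk : m ≤ k)
    (hx : |k * x - m| ≤ 1 / 2) :
    ∑ i ∈ range k, 2 * relu (x - (2 * (i : ℝ) + 1) / (2 * k)) = 2 * m * x - m ^ 2 / k := by
  have hk' : (0 : ℝ) < k := by exact_mod_cast hk
  obtain ⟨hlo, hhi⟩ := abs_le.mp hx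
  rw [← sum_range_add_sum_Ico _ hmk, sum_eq_zero (s := Ico m k), add_zero]
  · calc ∑ i ∈ range m, 2 * relu (x - (2 * (i : ℝ) + 1) / (2 * k))
        = ∑ i ∈ range m, (2 * x - (2 * (i : ℝ) + 1) / k) := by
          refine sum_congr rfl fun i hi => ?_
          have hi : (i : ℝ) + 1 ≤ m := by exact_mod_cast mem_range.mp hi
          rw [relu_of_nonneg (sub_nonneg.2 ((div_le_iff₀ (by positivity)).2 (by nlinarith)))]
          field_simp
      _ = 2 * m * x - m ^ 2 / k := by
          rw [sum_sub_distrib, ← sum_div, sum_range_two_mul_add_one]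
          simp only [sum_const, card_range, nsmul_eq_mul]
          ring
  · intro i hi
    have hi : (m : ℝ) ≤ i := by exact_mod_cast (mem_Ico.mp hi).1
    rw [relu_of_nonpos (sub_nonpos.2 ((le_div_iff₀ (by positivity)).2 (by nlinarith))), mul_zero]

lemma sq_sub_phiSq_eq {k m : ℕ} {x : ℝ} (hk : 0 < k) (hmk : m ≤ k) (hx : |k * x - m| ≤ 1 / 2) :
    x ^ 2 - phiSq k x = (x - m / k) ^ 2 := by
  have hk' : (k : ℝ) ≠ 0 := by positivity
  rw [phiSq, sum_two_mul_relu_eq hk hmk hx]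
  field_simp
  ring

lemma exists_sq_sub_phiSq_eq {k : ℕ} {x : ℝ} (hk : 0 < k) (hx : x ∈ Set.Icc (0 : ℝ) 1) :
    ∃ m : ℕ, |k * x - m| ≤ 1 / 2 ∧ x ^ 2 - phiSq k x = (x - m / k) ^ 2 := by
  obtain ⟨m, hmk, hm⟩ := exists_nat_le_abs_sub_le_half (y := k * x) (by nlinarith [hx.1])
    (by nlinarith [hx.2, (Nat.cast_nonneg k : (0 : ℝ) ≤ k)])
  exact ⟨m, hm, sq_sub_phiSq_eq hk hmk hm⟩

lemma phiSq_le_sq {k : ℕ} {x : ℝ} (hk : 0 < k) (hx : x ∈ Set.Icc (0 : ℝ) 1) :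
    phiSq k x ≤ x ^ 2 := by
  obtain ⟨m, -, h⟩ := exists_sq_sub_phiSq_eq hk hx
  nlinarith [sq_nonneg (x - m / k)]

lemma abs_sq_sub_phiSq_le {k : ℕ} {x : ℝ} (hk : 0 < k) (hx : x ∈ Set.Icc (0 : ℝ) 1) :
    |x ^ 2 - phiSq k x| ≤ 1 / (4 * (k : ℝ) ^ 2) := by
  have hk' : (0 : ℝ) < k := by exact_mod_cast hk
  obtain ⟨m, hm, h⟩ := exists_sq_sub_phiSq_eq hk hx
  have hm2 : (k * x - m) ^ 2 ≤ (1 / 2) ^ 2 := sq_le_sq' (abs_le.mp hm).1 (abs_le.mp hm).2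
  calc |x ^ 2 - phiSq k x| = (k * x - m) ^ 2 / k ^ 2 := by
        rw [h, abs_of_nonneg (sq_nonneg _)]; field_simp
    _ ≤ (1 / 2) ^ 2 / k ^ 2 := by gcongr
    _ = 1 / (4 * (k : ℝ) ^ 2) := by ring

/-- The neurons of `φ_k`, rescaled: `2 σ(x - (2i+1)/(2k)) / k = a_i σ(w_i x + b_i)` with
`w_i = 2k/(2k+2i+1)`, `b_i = -(2i+1)/(2k+2i+1)` and `a_i = (2k+2i+1)/k²`. -/
noncomputable def sqNet (k : ℕ) : MLP 1 1 where
  depth := 1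
  width := fun ℓ => if ℓ = 1 then k else 1
  width_in := rfl
  width_out := rfl
  A
    | 0 => fun i _ => 2 * k / (2 * k + 2 * i + 1)
    | 1 => fun _ j => (2 * k + 2 * j + 1) / (k : ℝ) ^ 2
    | _ + 2 => 0
  b
    | 0 => fun i => -(2 * i + 1) / (2 * k + 2 * i + 1)
    | _ + 1 => 0

lemma sqNet_eval {k : ℕ} (hk : 0 < k) (t : ℝ) : (sqNet k).eval (fun _ => t) 0 = phiSq k t := by
  have hk' : (0 : ℝ) < k := by exact_mod_cast hk
  have e0 : (sqNet k).eval (fun _ => t) 0 =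
      ∑ j ∈ range k, ((2 * k + 2 * j + 1) / (k : ℝ) ^ 2) *
        relu (2 * k / (2 * k + 2 * j + 1) * t + -(2 * j + 1) / (2 * k + 2 * j + 1)) := by
    change ∑ j : Fin k, (2 * k + 2 * (j : ℝ) + 1) / (k : ℝ) ^ 2 * relu
        ((∑ _i : Fin 1, 2 * k / (2 * k + 2 * (j : ℝ) + 1) * t) + -(2 * j + 1) / (2 * k + 2 * j + 1))
      + 0 = _
    simp only [Fin.sum_univ_one, add_zero]
    exact Fin.sum_univ_eq_sum_range (fun j => (2 * k + 2 * (j : ℝ) + 1) / (k : ℝ) ^ 2 * relu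
      (2 * k / (2 * k + 2 * j + 1) * t + -(2 * j + 1) / (2 * k + 2 * j + 1))) k
  rw [e0, phiSq, mul_sum]
  refine sum_congr rfl fun j _ => ?_
  have hD : (0 : ℝ) < 2 * k + 2 * j + 1 := by positivity
  have harg : 2 * k / (2 * k + 2 * j + 1) * t + -(2 * j + 1) / (2 * k + 2 * j + 1)
      = 2 * k / (2 * k + 2 * j + 1) * (t - (2 * j + 1) / (2 * k)) := by
    field_simp; ring
  rw [harg, relu_mul_of_nonneg (by positivity)]
  field_simp

lemma sqNet_kappa_le {k : ℕ} (hk : 0 < k) : (sqNet k).kappa ≤ 3 := by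
  have hk' : (0 : ℝ) < k := by exact_mod_cast hk
  have hidden : MLP.augNorm ((sqNet k).A 0) ((sqNet k).b 0) ≤ 1 := by
    refine Real.iSup_le (fun i => le_of_eq ?_) zero_le_one
    have hD : (0 : ℝ) < 2 * k + 2 * i + 1 := by positivity
    change (∑ _j : Fin 1, |2 * (k : ℝ) / (2 * k + 2 * i + 1)|)
      + |-(2 * (i : ℝ) + 1) / (2 * k + 2 * i + 1)| = 1
    rw [Fin.sum_univ_one, abs_of_pos (by positivity), abs_of_nonpos (div_nonpos_of_nonpos_of_nonneg (by linarith) hD.le)]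
    field_simp
    ring
  have output : MLP.augNorm ((sqNet k).A 1) ((sqNet k).b 1) ≤ 3 := by
    refine Real.iSup_le (fun i => le_of_eq ?_) zero_le_three
    change (∑ j : Fin k, |(2 * k + 2 * (j : ℝ) + 1) / (k : ℝ) ^ 2|) + |(0 : ℝ)| = 3
    simp only [abs_zero, add_zero]
    rw [Fin.sum_univ_eq_sum_range (fun j => |(2 * k + 2 * (j : ℝ) + 1) / (k : ℝ) ^ 2|)]
    calc ∑ j ∈ range k, |(2 * k + 2 * (j : ℝ) + 1) / (k : ℝ) ^ 2|
        = (∑ j ∈ range k, (2 * (k : ℝ) + (2 * j + 1))) / (k : ℝ) ^ 2 := by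
          rw [sum_div]
          refine sum_congr rfl fun j _ => ?_
          rw [abs_of_pos (by positivity), add_assoc]
      _ = 3 := by
          rw [sum_add_distrib, sum_range_two_mul_add_one]
          simp only [sum_const, card_range, nsmul_eq_mul]
          field_simp
          ring
  rw [MLP.kappa, show (sqNet k).depth = 1 from rfl, prod_range_one, max_eq_right hidden]
  linarith

lemma phiSq_mem_NNRealScalarNorm {k : ℕ} (hk : 0 < k) : phiSq k ∈ NNRealScalarNorm k 1 3 := by
  refine ⟨(sqNet k).eval, ⟨sqNet k, rfl, fun ℓ h1 h2 => ?_, sqNet_kappa_le hk, rfl⟩,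
    funext fun t => (sqNet_eval hk t).symm⟩
  obtain rfl : ℓ = 1 := le_antisymm h2 h1
  simp [sqNet]

/-- norm-constrained approximation of `x²`.  For any `k ∈ ℕ` the function
`φ_k` vanishes on `(-∞, 0]`, maps `[0,1]` into `[0,1]`, approximates `x²` on `[0,1]` with
error `1/(2k²)`, and belongs to `NN_{1,1}(k, 1, 3)`. -/
theorem statement8 (k : ℕ) (hk : 1 ≤ k) :
    (∀ x : ℝ, x ≤ 0 → phiSq k x = 0) ∧
    (∀ x ∈ Set.Icc (0 : ℝ) 1, phiSq k x ∈ Set.Icc (0 : ℝ) 1) ∧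
    (∀ x ∈ Set.Icc (0 : ℝ) 1, |x ^ 2 - phiSq k x| ≤ 1 / (2 * (k : ℝ) ^ 2)) ∧
    phiSq k ∈ NNRealScalarNorm k 1 3 := by
  refine ⟨fun x hx => phiSq_of_nonpos hx, fun x hx => ⟨phiSq_nonneg k x, ?_⟩, fun x hx => ?_,
    phiSq_mem_NNRealScalarNorm hk⟩
  · nlinarith [phiSq_le_sq hk hx, hx.1, hx.2]
  · refine (abs_sq_sub_phiSq_le hk hx).trans (one_div_le_one_div_of_le (by positivity) ?_)
    nlinarith
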